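/- For every integer d ≥ 2, writing λ_l = l(l+d−1) and λ̃_l = l(l+d−1) + d²/4 for l ∈ ℕ, the series ∑_{l=0}^∞ ((2l+d)/d)·C(d+l−1, d−1)·( λ̃_{l+1}^{−d/2} − λ̃_l^{−d/2} + (d/4)·(λ̃_{l+1}^{−1−d/2} + λ̃_l^{−1−d/2})·(λ_{l+1} − λ_l) ) converges and its sum equals 2/d!. -/

import Mathlib

/-!
Write `μ_l = lamShift d l`, `N_l = weight d l` and `g(t) = (d/2) t^(-1-d/2)`, so that
`μ_l^(-d/2) - μ_{l+1}^(-d/2) = ∫_{μ_l}^{μ_{l+1}} g` and `μ_{l+1} - μ_l = λ_{l+1} - λ_l`.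
The `l`-th term is `N_l` times the error of the trapezoidal rule for this integral, which is
nonnegative because `g` is convex; hence the series has sum `s` as soon as its partial sums tend
to `s`. Because `(N_{l+1} - N_l) μ_{l+1} = (d/4)(N_{l+1}(2l+2+d) + N_l(2l+d))`, the partial sums
telescope to `N_n μ_{n+1}^(-d/2) (1 + (d/4)(2n+d)/μ_{n+1})`. Finally
`N_n = (2/d!)(n + d/2)(n+1)⋯(n+d-1)` and `√μ_{n+1} ∼ n`, so this tends to `2/d!`.
-/

/-- The eigenvalues `λ_l = l(l+d−1)` of the Laplacian on the `d`-sphere. -/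
noncomputable def lam (d l : ℕ) : ℝ := (l : ℝ) * ((l : ℝ) + (d : ℝ) - 1)

/-- The shifted energy levels `λ̃_l = l(l+d−1) + d²/4`. -/
noncomputable def lamShift (d l : ℕ) : ℝ := lam d l + (d : ℝ) ^ 2 / 4

open Filter Topology Set Finset MeasureTheory intervalIntegral

theorem convexOn_rpow_of_nonpos {c : ℝ} (hc : c ≤ 0) :
    ConvexOn ℝ (Ioi 0) fun x : ℝ => x ^ c := by
  refine ⟨convex_Ioi 0, fun x hx y hy α β hα hβ hαβ => ?_⟩
  have hxy : α • x + β • y ∈ Ioi (0 : ℝ) := convex_Ioi 0 hx hy hα hβ hαβ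
  have hlog : α • Real.log x + β • Real.log y ≤ Real.log (α • x + β • y) :=
    strictConcaveOn_log_Ioi.concaveOn.2 hx hy hα hβ hαβ
  simp only [smul_eq_mul] at hxy hlog ⊢
  rw [Real.rpow_def_of_pos hxy, Real.rpow_def_of_pos hx, Real.rpow_def_of_pos hy]
  calc Real.exp (Real.log (α * x + β * y) * c)
      ≤ Real.exp (α * (Real.log x * c) + β * (Real.log y * c)) := by
        gcongr; nlinarith [mul_le_mul_of_nonpos_right hlog hc]
    _ ≤ α * Real.exp (Real.log x * c) + β * Real.exp (Real.log y * c) := by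
        simpa only [smul_eq_mul] using convexOn_exp.2 (mem_univ _) (mem_univ _) hα hβ hαβ

theorem ConvexOn.intervalIntegral_le_trapezoid {f : ℝ → ℝ} {a b : ℝ} (hab : a ≤ b)
    (hf : ConvexOn ℝ (Icc a b) f) (hfi : IntervalIntegrable f volume a b) :
    ∫ x in a..b, f x ≤ (b - a) / 2 * (f a + f b) := by
  rcases hab.eq_or_lt with rfl | hlt
  · simp
  have hchord : ∀ x ∈ Icc a b, f x ≤ f a + (f b - f a) / (b - a) * (x - a) := by
    rintro x ⟨hax, hxb⟩
    have := hf.2 (left_mem_Icc.2 hab) (right_mem_Icc.2 hab)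
      (div_nonneg (sub_nonneg.2 hxb) (sub_pos.2 hlt).le)
      (div_nonneg (sub_nonneg.2 hax) (sub_pos.2 hlt).le) (by field_simp; ring)
    have hx : ((b - x) / (b - a)) • a + ((x - a) / (b - a)) • b = x := by
      simp only [smul_eq_mul]; field_simp; ring
    rw [hx] at this
    refine this.trans_eq ?_
    simp only [smul_eq_mul]; field_simp; ring
  calc ∫ x in a..b, f x ≤ ∫ x in a..b, f a + (f b - f a) / (b - a) * (x - a) :=
        integral_mono_on hab hfi (by apply Continuous.intervalIntegrable; fun_prop) hchord
    _ = (b - a) / 2 * (f a + f b) := by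
        rw [integral_add intervalIntegrable_const
            (by apply Continuous.intervalIntegrable; fun_prop),
          intervalIntegral.integral_const_mul,
          intervalIntegral.integral_comp_sub_right (fun x => x), integral_id,
          intervalIntegral.integral_const]
        field_simp
        ring

theorem Real.rpow_neg_sub_rpow_neg_le {p u v : ℝ} (hp : 0 < p) (hu : 0 < u) (huv : u ≤ v) :
    u ^ (-p) - v ^ (-p) ≤ p * ((v - u) / 2 * (u ^ (-1 - p) + v ^ (-1 - p))) := by
  have hIcc : Icc u v ⊆ Ioi 0 := fun t ht => hu.trans_le ht.1
  have h0 : (0 : ℝ) ∉ uIcc u v := by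
    rw [uIcc_of_le huv]; exact fun h => (mem_Ioi.1 (hIcc h)).false
  have hint : ∫ t in u..v, t ^ (-1 - p) = (u ^ (-p) - v ^ (-p)) / p := by
    rw [integral_rpow (Or.inr ⟨by linarith, h0⟩), show -1 - p + 1 = -p by ring]
    field_simp; ring
  have htrap := ((convexOn_rpow_of_nonpos (by linarith : -1 - p ≤ 0)).subset hIcc
    (convex_Icc u v)).intervalIntegral_le_trapezoid huv
    (intervalIntegral.intervalIntegrable_rpow (Or.inr h0))
  rw [hint, div_le_iff₀ hp] at htrap
  linarith

theorem Nat.factorial_mul_choose_eq_prod (n k : ℕ) :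
    (Nat.factorial k * (n + k).choose k : ℝ) = ∏ i ∈ range k, ((n : ℝ) + i + 1) := by
  rw_mod_cast [← Nat.ascFactorial_eq_factorial_mul_choose, Nat.ascFactorial_eq_prod_range]
  ring_nf

theorem tendsto_add_div_sqrt_sq_add (a b : ℝ) :
    Tendsto (fun x : ℝ => (x + a) / √(x ^ 2 + b)) atTop (𝓝 1) := by
  have hlim : Tendsto (fun y : ℝ => (1 + a * y) / √(1 + b * y ^ 2)) (𝓝 0) (𝓝 1) := by
    have hcont : ContinuousAt (fun y : ℝ => (1 + a * y) / √(1 + b * y ^ 2)) 0 := by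
      fun_prop (disch := simp)
    simpa using hcont.tendsto
  refine (hlim.comp tendsto_inv_atTop_zero).congr' ?_
  filter_upwards [eventually_gt_atTop 0] with x hx
  have hsq : x ^ 2 + b = x ^ 2 * (1 + b * x⁻¹ ^ 2) := by field_simp
  rw [Function.comp_apply, hsq, Real.sqrt_mul (sq_nonneg x), Real.sqrt_sq hx.le]
  field_simp

namespace SphereSumRule

variable {d : ℕ}

noncomputable def weight (d l : ℕ) : ℝ :=
  (2 * (l : ℝ) + d) / d * (d + l - 1).choose (d - 1)

theorem lam_succ_sub_lam (d l : ℕ) : lam d (l + 1) - lam d l = 2 * l + d := by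
  unfold lam; push_cast; ring

theorem lamShift_succ_sub_lamShift (d l : ℕ) :
    lamShift d (l + 1) - lamShift d l = 2 * l + d := by
  unfold lamShift; linarith [lam_succ_sub_lam d l]

theorem lamShift_succ_eq (d n : ℕ) :
    lamShift d (n + 1) = ((n : ℝ) + (d + 1) / 2) ^ 2 + (2 * d - 1) / 4 := by
  unfold lamShift lam; push_cast; ring

theorem lamShift_pos (hd : 0 < d) (l : ℕ) : 0 < lamShift d l := by
  have : (1 : ℝ) ≤ d := by exact_mod_cast hd
  have : (0 : ℝ) ≤ l := l.cast_nonneg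
  unfold lamShift lam
  nlinarith

theorem weight_zero (hd : 0 < d) : weight d 0 = 1 := by
  simp [weight, hd.ne']

theorem weight_succ (hd : 0 < d) (l : ℕ) :
    weight d (l + 1) =
      (2 * (l + 1 : ℕ) + d) / d * ((d + l) / (l + 1) * (d + l - 1).choose (d - 1)) := by
  obtain ⟨e, rfl⟩ : ∃ e, d = e + 1 := ⟨d - 1, by omega⟩
  have hchoose : ((e + l).choose e * (e + l + 1) : ℝ) = (e + l + 1).choose e * (l + 1) := by
    have := Nat.choose_mul_succ_eq (e + l) e
    rw [show e + l + 1 - e = l + 1 by omega] at this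
    exact_mod_cast this
  simp only [weight, show e + 1 + (l + 1) - 1 = e + l + 1 by omega,
    show e + 1 + l - 1 = e + l by omega, Nat.add_sub_cancel]
  push_cast
  field_simp
  linear_combination -hchoose

theorem weight_succ_sub_weight_mul_lamShift (hd : 0 < d) (l : ℕ) :
    (weight d (l + 1) - weight d l) * lamShift d (l + 1) =
      d / 4 * (weight d (l + 1) * (2 * (l + 1 : ℕ) + d) + weight d l * (2 * l + d)) := by
  rw [weight_succ hd, weight, lamShift_succ_eq]
  push_cast
  field_simp
  ring

noncomputable def summand (d l : ℕ) : ℝ :=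
  weight d l * (lamShift d (l + 1) ^ (-(d : ℝ) / 2) - lamShift d l ^ (-(d : ℝ) / 2) +
    ((d : ℝ) / 4) *
      (lamShift d (l + 1) ^ (-1 - (d : ℝ) / 2) + lamShift d l ^ (-1 - (d : ℝ) / 2)) *
      (lam d (l + 1) - lam d l))

noncomputable def partialSum (d n : ℕ) : ℝ :=
  weight d n * (lamShift d (n + 1) ^ (-(d : ℝ) / 2) +
    (d : ℝ) / 4 * (2 * n + d) * lamShift d (n + 1) ^ (-1 - (d : ℝ) / 2))

theorem lamShift_rpow_neg_half (hd : 0 < d) (l : ℕ) :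
    lamShift d l ^ (-(d : ℝ) / 2) = lamShift d l * lamShift d l ^ (-1 - (d : ℝ) / 2) := by
  rw [show -1 - (d : ℝ) / 2 = -(d : ℝ) / 2 - 1 by ring,
    Real.rpow_sub_one (lamShift_pos hd l).ne']
  field_simp [(lamShift_pos hd l).ne']

theorem summand_zero (hd : 0 < d) : summand d 0 = partialSum d 0 := by
  have h0 : lamShift d 0 = (d : ℝ) ^ 2 / 4 := by simp [lamShift, lam]
  rw [summand, partialSum, lamShift_rpow_neg_half hd 0, h0, lam_succ_sub_lam, weight_zero hd]
  push_cast
  ring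

theorem summand_succ (hd : 0 < d) (l : ℕ) :
    summand d (l + 1) = partialSum d (l + 1) - partialSum d l := by
  have hW := weight_succ_sub_weight_mul_lamShift hd l
  simp only [summand, partialSum, lam_succ_sub_lam, lamShift_rpow_neg_half hd] at hW ⊢
  push_cast at hW ⊢
  linear_combination (-lamShift d (l + 1) ^ (-1 - (d : ℝ) / 2)) * hW

theorem sum_range_succ_summand (hd : 0 < d) (n : ℕ) :
    ∑ l ∈ range (n + 1), summand d l = partialSum d n := by
  induction n with
  | zero => simpa using summand_zero hd
  | succ n ih => rw [sum_range_succ, ih, summand_succ hd]; ring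

theorem summand_nonneg (hd : 0 < d) (l : ℕ) : 0 ≤ summand d l := by
  have hgap := lamShift_succ_sub_lamShift d l
  have htrap := Real.rpow_neg_sub_rpow_neg_le (p := d / 2) (by positivity) (lamShift_pos hd l)
    (by rw [← sub_nonneg, hgap]; positivity)
  rw [hgap] at htrap
  rw [summand, lam_succ_sub_lam, neg_div]
  refine mul_nonneg (by unfold weight; positivity) ?_
  linarith

theorem tendsto_add_div_sqrt_lamShift (d : ℕ) (c : ℝ) :
    Tendsto (fun n : ℕ => (n + c) / √(lamShift d (n + 1))) atTop (𝓝 1) := by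
  have hx : Tendsto (fun n : ℕ => (n : ℝ) + (d + 1) / 2) atTop atTop :=
    tendsto_atTop_add_const_right _ _ tendsto_natCast_atTop_atTop
  refine ((tendsto_add_div_sqrt_sq_add (c - (d + 1) / 2) ((2 * d - 1) / 4)).comp hx).congr
    fun n => ?_
  simp only [Function.comp_apply, lamShift_succ_eq]
  ring_nf

theorem weight_eq_prod (hd : 0 < d) (n : ℕ) :
    weight d n =
      2 / d.factorial * ((n + d / 2) * ∏ j ∈ range (d - 1), ((n : ℝ) + j + 1)) := by
  obtain ⟨e, rfl⟩ : ∃ e, d = e + 1 := ⟨d - 1, by omega⟩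
  rw [Nat.add_sub_cancel, ← Nat.factorial_mul_choose_eq_prod, weight,
    show e + 1 + n - 1 = n + e by omega, Nat.factorial_succ]
  push_cast
  field_simp

theorem weight_mul_rpow_eq_prod (hd : 0 < d) (n : ℕ) :
    weight d n * lamShift d (n + 1) ^ (-(d : ℝ) / 2) =
      2 / d.factorial * ((n + d / 2) / √(lamShift d (n + 1)) *
        ∏ j ∈ range (d - 1), (((n : ℝ) + j + 1) / √(lamShift d (n + 1)))) := by
  have hμ := lamShift_pos hd (n + 1)
  have hpow : lamShift d (n + 1) ^ (-(d : ℝ) / 2) = (√(lamShift d (n + 1)) ^ d)⁻¹ := by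
    rw [Real.sqrt_eq_rpow, ← Real.rpow_natCast, ← Real.rpow_mul hμ.le,
      ← Real.rpow_neg hμ.le]
    ring_nf
  have hsplit : √(lamShift d (n + 1)) ^ d =
      √(lamShift d (n + 1)) * √(lamShift d (n + 1)) ^ (d - 1) := by
    rw [← pow_succ', Nat.sub_add_cancel hd]
  rw [weight_eq_prod hd, hpow, hsplit, prod_div_distrib, prod_const, card_range]
  field_simp

theorem tendsto_weight_mul_rpow (hd : 0 < d) :
    Tendsto (fun n : ℕ => weight d n * lamShift d (n + 1) ^ (-(d : ℝ) / 2)) atTop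
      (𝓝 (2 / d.factorial)) := by
  have hprod := tendsto_finsetProd (range (d - 1)) fun j _ =>
    tendsto_add_div_sqrt_lamShift d ((j : ℝ) + 1)
  have := (tendsto_add_div_sqrt_lamShift d ((d : ℝ) / 2)).mul hprod
  simp only [prod_const_one, mul_one] at this
  simpa only [weight_mul_rpow_eq_prod hd, add_assoc, mul_one] using
    this.const_mul (2 / d.factorial : ℝ)

theorem tendsto_lamShift_atTop (d : ℕ) :
    Tendsto (fun n : ℕ => lamShift d (n + 1)) atTop atTop := by
  refine tendsto_atTop_mono (fun n => ?_) tendsto_natCast_atTop_atTop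
  have : (0 : ℝ) ≤ d := d.cast_nonneg
  rw [lamShift_succ_eq]
  nlinarith

theorem tendsto_linear_div_lamShift (d : ℕ) :
    Tendsto (fun n : ℕ => (2 * n + d) / lamShift d (n + 1)) atTop (𝓝 0) := by
  have hlin := (tendsto_add_div_sqrt_lamShift d ((d : ℝ) / 2)).const_mul 2
  refine (hlin.div_atTop (Real.tendsto_sqrt_atTop.comp (tendsto_lamShift_atTop d))).congr' ?_
  filter_upwards [(tendsto_lamShift_atTop d).eventually_gt_atTop 0] with n hn
  rw [Function.comp_apply, mul_div_assoc', div_div, Real.mul_self_sqrt hn.le]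
  ring_nf

theorem partialSum_eq (hd : 0 < d) (n : ℕ) :
    partialSum d n = weight d n * lamShift d (n + 1) ^ (-(d : ℝ) / 2) *
      (1 + d / 4 * ((2 * n + d) / lamShift d (n + 1))) := by
  rw [partialSum, lamShift_rpow_neg_half hd]
  field_simp [(lamShift_pos hd (n + 1)).ne']

theorem tendsto_partialSum (hd : 0 < d) :
    Tendsto (partialSum d) atTop (𝓝 (2 / d.factorial)) := by
  have := (tendsto_weight_mul_rpow hd).mul
    (((tendsto_linear_div_lamShift d).const_mul ((d : ℝ) / 4)).const_add 1)
  simpa only [mul_zero, add_zero, mul_one, ← partialSum_eq hd] using this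

end SphereSumRule

open SphereSumRule

theorem sum_rule_sphere (d : ℕ) (hd : 2 ≤ d) :
    HasSum
      (fun l : ℕ =>
        ((2 * (l : ℝ) + (d : ℝ)) / (d : ℝ)) * (Nat.choose (d + l - 1) (d - 1) : ℝ) *
          (lamShift d (l + 1) ^ (-(d : ℝ) / 2) - lamShift d l ^ (-(d : ℝ) / 2) +
            ((d : ℝ) / 4) *
              (lamShift d (l + 1) ^ (-1 - (d : ℝ) / 2) + lamShift d l ^ (-1 - (d : ℝ) / 2)) *
              (lam d (l + 1) - lam d l)))
      (2 / (Nat.factorial d : ℝ)) := by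
  have hd' : 0 < d := by omega
  show HasSum (summand d) _
  rw [hasSum_iff_tendsto_nat_of_nonneg (summand_nonneg hd')]
  refine (tendsto_add_atTop_iff_nat 1).1 ?_
  simpa only [sum_range_succ_summand hd'] using tendsto_partialSum hd'
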